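/- Let H : E → ℝ be smooth. At every point x = (t,q,p) ∈ E, the kernel of dα_H is the line spanned by Z_H: a vector v ∈ E satisfies dα_H(x)(v, w) = 0 for all w ∈ E if and only if v = μ · Z_H(x) = μ · (1, ∂H/∂p(x), −∂H/∂q(x)) for some μ ∈ ℝ. -/

import Mathlib

noncomputable section
open scoped ContDiff

/-- The extended phase space `E = ℝ × ℝⁿ × ℝⁿ`, with points `x = (t, q, p)`. -/
abbrev EE (n : ℕ) : Type := ℝ × (Fin n → ℝ) × (Fin n → ℝ)

/-- The Poincaré–Cartan 1-form `α_H = p dq − H dt`: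
`α_H(x)(τ̂, ξ̂, η̂) = ∑ i, pᵢ ξ̂ᵢ − H(x) τ̂`. -/
def pcForm {n : ℕ} (H : EE n → ℝ) (x : EE n) : EE n →L[ℝ] ℝ :=
  (∑ i, x.2.2 i • ((ContinuousLinearMap.proj i).comp
      ((ContinuousLinearMap.fst ℝ (Fin n → ℝ) (Fin n → ℝ)).comp
        (ContinuousLinearMap.snd ℝ ℝ ((Fin n → ℝ) × (Fin n → ℝ))))))
    - H x • ContinuousLinearMap.fst ℝ ℝ ((Fin n → ℝ) × (Fin n → ℝ))

/-- The vector field `Z_H(x) = (1, ∂H/∂p(x), −∂H/∂q(x))` of Hamilton's equations. -/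
def ZH {n : ℕ} (H : EE n → ℝ) (x : EE n) : EE n :=
  (1, fun i => fderiv ℝ H x (0, 0, Pi.single i 1),
      fun i => - fderiv ℝ H x (0, Pi.single i 1, 0))

/-- The Lie derivative of a 1-form `α` along a vector field `ζ`:
`(L_ζ α)(x)(v) = (Dα(x)(ζ(x)))(v) + α(x)(Dζ(x)(v))`. -/
def lieDeriv {n : ℕ} (ζ : EE n → EE n) (α : EE n → (EE n →L[ℝ] ℝ)) (x : EE n) :
    EE n →L[ℝ] ℝ :=
  fderiv ℝ α x (ζ x) + (α x).comp (fderiv ℝ ζ x)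

/-- The exterior derivative of a 1-form:
`dα(x)(u,v) = (Dα(x)u)(v) − (Dα(x)v)(u)`. -/
def extDerivOneForm {n : ℕ} (α : EE n → (EE n →L[ℝ] ℝ)) (x u v : EE n) : ℝ :=
  fderiv ℝ α x u v - fderiv ℝ α x v u

/-! In coordinates, `dα_H(x)(u, w) = Σ (u_p w_q − w_p u_q) + dH(w) u_t − dH(u) w_t`.
Since `dH(Z_H) = ∂H/∂t` (conservation of energy along Hamilton's flow), `Z_H(x)` lies in the
kernel. A kernel vector with vanishing `t`-component is zero: pairing it with the `p`- and
`q`-coordinate directions reads off its `q`- and `p`-components. Apply this to `v − v_t Z_H(x)`. -/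

namespace PoincareCartan

variable {n : ℕ}

lemma extDerivOneForm_sub_left (α : EE n → (EE n →L[ℝ] ℝ)) (x u u' w : EE n) :
    extDerivOneForm α x (u - u') w = extDerivOneForm α x u w - extDerivOneForm α x u' w := by
  simp only [extDerivOneForm, map_sub, sub_apply]
  ring

lemma extDerivOneForm_smul_left (α : EE n → (EE n →L[ℝ] ℝ)) (x : EE n) (c : ℝ) (u w : EE n) :
    extDerivOneForm α x (c • u) w = c * extDerivOneForm α x u w := by
  simp only [extDerivOneForm, map_smul, smul_apply, smul_eq_mul]
  ring

lemma clm_apply_eq_coord_sum {M : Type*} [AddCommGroup M] [Module ℝ M] [TopologicalSpace M]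
    (f : EE n →L[ℝ] M) (u : EE n) :
    f u = u.1 • f (1, 0, 0) + ∑ i, u.2.1 i • f (0, Pi.single i 1, 0)
      + ∑ i, u.2.2 i • f (0, 0, Pi.single i 1) := by
  have hu : u = u.1 • ((1, 0, 0) : EE n) + ∑ i, u.2.1 i • ((0, Pi.single i 1, 0) : EE n)
      + ∑ i, u.2.2 i • ((0, 0, Pi.single i 1) : EE n) := by
    ext <;> simp [Prod.fst_sum, Prod.snd_sum, Pi.single_apply]
  conv_lhs => rw [hu]
  simp only [map_add, map_sum, map_smul]

lemma fderiv_pcForm_apply {H : EE n → ℝ} {x : EE n} (hH : DifferentiableAt ℝ H x) (u w : EE n) :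
    fderiv ℝ (pcForm H) x u w = ∑ i, u.2.2 i * w.2.1 i - fderiv ℝ H x u * w.1 := by
  have hα : HasFDerivAt (pcForm H) _ x :=
    (HasFDerivAt.fun_sum fun i _ =>
      (((ContinuousLinearMap.proj i).comp (ContinuousLinearMap.snd ℝ (Fin n → ℝ) (Fin n → ℝ)
        |>.comp (ContinuousLinearMap.snd ℝ ℝ _))).hasFDerivAt (x := x)).smul_const
          (_ : EE n →L[ℝ] ℝ)).sub (hH.hasFDerivAt.smul_const (_ : EE n →L[ℝ] ℝ))
  simp [hα.fderiv]

lemma extDerivOneForm_pcForm {H : EE n → ℝ} {x : EE n} (hH : DifferentiableAt ℝ H x)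
    (u w : EE n) :
    extDerivOneForm (pcForm H) x u w = ∑ i, (u.2.2 i * w.2.1 i - w.2.2 i * u.2.1 i)
      + (fderiv ℝ H x w * u.1 - fderiv ℝ H x u * w.1) := by
  rw [extDerivOneForm, fderiv_pcForm_apply hH, fderiv_pcForm_apply hH, Finset.sum_sub_distrib]
  ring

lemma fderiv_apply_ZH (H : EE n → ℝ) (x : EE n) :
    fderiv ℝ H x (ZH H x) = fderiv ℝ H x (1, 0, 0) := by
  rw [clm_apply_eq_coord_sum (fderiv ℝ H x) (ZH H x)]
  simp only [ZH, smul_eq_mul, one_mul, neg_mul, Finset.sum_neg_distrib,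
    mul_comm (fderiv ℝ H x (0, Pi.single _ 1, 0)), add_neg_cancel_right]

lemma extDerivOneForm_pcForm_ZH_left {H : EE n → ℝ} {x : EE n} (hH : DifferentiableAt ℝ H x)
    (w : EE n) : extDerivOneForm (pcForm H) x (ZH H x) w = 0 := by
  rw [extDerivOneForm_pcForm hH, fderiv_apply_ZH, clm_apply_eq_coord_sum (fderiv ℝ H x) w]
  simp only [ZH, smul_eq_mul, Finset.sum_sub_distrib, neg_mul, Finset.sum_neg_distrib,
    mul_comm (w.2.1 _)]
  ring

lemma eq_zero_of_extDerivOneForm_pcForm_left {H : EE n → ℝ} {x u : EE n}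
    (hH : DifferentiableAt ℝ H x) (hu : u.1 = 0) (h : ∀ w, extDerivOneForm (pcForm H) x u w = 0) :
    u = 0 := by
  have hq : ∀ i, u.2.1 i = 0 := fun i => by
    simpa [extDerivOneForm_pcForm hH, hu, Pi.single_apply] using h (0, 0, Pi.single i 1)
  have hp : ∀ i, u.2.2 i = 0 := fun i => by
    simpa [extDerivOneForm_pcForm hH, hu, Pi.single_apply] using h (0, Pi.single i 1, 0)
  ext <;> simp [hu, hq, hp]

end PoincareCartan

open PoincareCartan in
theorem kernel_pcForm_spanned_by_ZH {n : ℕ}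
    (H : EE n → ℝ) (hH : ContDiff ℝ ∞ H) (x v : EE n) :
    (∀ w, extDerivOneForm (pcForm H) x v w = 0) ↔ ∃ μ : ℝ, v = μ • ZH H x := by
  have hd : DifferentiableAt ℝ H x := hH.differentiable (by simp) x
  constructor
  · intro hv
    refine ⟨v.1, sub_eq_zero.mp (eq_zero_of_extDerivOneForm_pcForm_left hd ?_ fun w => ?_)⟩
    · simp [ZH]
    · rw [extDerivOneForm_sub_left, extDerivOneForm_smul_left, hv,
        extDerivOneForm_pcForm_ZH_left hd, mul_zero, sub_zero]
  · rintro ⟨μ, rfl⟩ w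
    rw [extDerivOneForm_smul_left, extDerivOneForm_pcForm_ZH_left hd, mul_zero]
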